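/- Let W ⊆ ℝ² be open and connected and let Φ : W → ℝ² be a C¹ diffeomorphism onto its (open) image Φ(W). Assume that Φ satisfies the asymptotic lattice-mapping property at every point of W: for every w ∈ W there exist sequences h_n → 0⁺ and r_n → 0⁺ with h_n/r_n → 0, points w_n → w with B(w_n, r_n) ⊆ W, vectors a_n, b_n ∈ ℝ², and errors δ_n ≥ 0 with δ_n/h_n → 0, such that dist(Φ(x), h_n ℤ² + b_n) ≤ δ_n for every x ∈ (h_n ℤ² + a_n) ∩ B(w_n, r_n). Assume in addition that the inverse map Φ⁻¹ : Φ(W) → W satisfies the same asymptotic lattice-mapping property at every point of Φ(W). Then there is a single matrix M ∈ GL(2, ℤ) (an integer 2×2 matrix with determinant ±1) such that DΦ(w) = M for all w ∈ W. -/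

import Mathlib

open Filter Metric

/-- The **asymptotic lattice-mapping property** of a map `Φ` at every point of
a set `W ⊆ ℝ²`: for every `w ∈ W` there are scales `h_n → 0⁺`, radii
`r_n → 0⁺` with `h_n / r_n → 0`, centers `w_n → w` with
`closedBall (w_n, r_n) ⊆ W`, offsets `a_n, b_n ∈ ℝ²` and errors `δ_n ≥ 0` with
`δ_n / h_n → 0`, such that every point of the lattice `h_n ℤ² + a_n` lying in
`closedBall (w_n, r_n)` is mapped by `Φ` within distance `δ_n` of the lattice
`h_n ℤ² + b_n`. -/
def LatticeMappingProperty (Φ : ℝ × ℝ → ℝ × ℝ) (W : Set (ℝ × ℝ)) : Prop :=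
  ∀ w ∈ W, ∃ (hseq rseq δ : ℕ → ℝ) (wseq a b : ℕ → ℝ × ℝ),
    (∀ n, 0 < hseq n) ∧ (∀ n, 0 < rseq n) ∧ (∀ n, 0 ≤ δ n) ∧
    Tendsto hseq atTop (nhds 0) ∧
    Tendsto rseq atTop (nhds 0) ∧
    Tendsto (fun n => hseq n / rseq n) atTop (nhds 0) ∧
    Tendsto (fun n => δ n / hseq n) atTop (nhds 0) ∧
    Tendsto wseq atTop (nhds w) ∧
    (∀ n, closedBall (wseq n) (rseq n) ⊆ W) ∧
    (∀ n, ∀ k : ℤ × ℤ,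
      a n + hseq n • ((k.1 : ℝ), (k.2 : ℝ)) ∈ closedBall (wseq n) (rseq n) →
      ∃ m : ℤ × ℤ,
        ‖Φ (a n + hseq n • ((k.1 : ℝ), (k.2 : ℝ)))
          - (b n + hseq n • ((m.1 : ℝ), (m.2 : ℝ)))‖ ≤ δ n)

/-!
The derivative `DΦ(w)` maps `ℤ²` into `ℤ²`. Compare `Φ` at two neighbouring points `x` and
`x + h j` of the lattice `h ℤ² + a`: both images lie within `o(h)` of `h ℤ² + b`, while their
difference is `h • DΦ(w) j + o(h)` because `DΦ` is continuous. Hence `DΦ(w) j` is a limit of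
integer vectors, so it is one. Being continuous with values in the discrete set `ℤ²`, `DΦ` is
then a constant integer matrix `M` on the connected set `W`. The same argument applied to `Ψ`
at `Φ(w₀)` gives an integer matrix `N`, and the chain rule forces `N M = 1`, so `det M = ±1`.
-/

open Set Topology

def intPoint (k : ℤ × ℤ) : ℝ × ℝ := ((k.1 : ℝ), (k.2 : ℝ))

theorem intPoint_add (k l : ℤ × ℤ) : intPoint (k + l) = intPoint k + intPoint l := by
  simp [intPoint]

theorem intPoint_sub (k l : ℤ × ℤ) : intPoint (k - l) = intPoint k - intPoint l := by
  simp [intPoint]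

theorem isClosedEmbedding_intPoint : IsClosedEmbedding intPoint :=
  Int.isClosedEmbedding_coe_real.prodMap Int.isClosedEmbedding_coe_real

theorem ContinuousLinearMap.ext_intPoint {F : Type*} [TopologicalSpace F] [AddCommMonoid F]
    [Module ℝ F] {f g : ℝ × ℝ →L[ℝ] F} (h : ∀ k, f (intPoint k) = g (intPoint k)) : f = g :=
  prod_ext (ext_ring (by simpa [intPoint] using h (1, 0)))
    (ext_ring (by simpa [intPoint] using h (0, 1)))

theorem exists_abs_add_mul_intCast_sub_le (a c : ℝ) {h : ℝ} (hh : 0 < h) :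
    ∃ k : ℤ, |a + h * k - c| ≤ h / 2 := by
  refine ⟨round ((c - a) / h), ?_⟩
  have hround := abs_sub_round ((c - a) / h)
  have hscale : a + h * round ((c - a) / h) - c = h * (round ((c - a) / h) - (c - a) / h) := by
    field_simp
    ring
  rw [hscale, abs_mul, abs_of_pos hh, abs_sub_comm]
  nlinarith

theorem exists_dist_add_smul_intPoint_le (a c : ℝ × ℝ) {h : ℝ} (hh : 0 < h) :
    ∃ k : ℤ × ℤ, dist (a + h • intPoint k) c ≤ h / 2 := by
  obtain ⟨k₁, hk₁⟩ := exists_abs_add_mul_intCast_sub_le a.1 c.1 hh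
  obtain ⟨k₂, hk₂⟩ := exists_abs_add_mul_intCast_sub_le a.2 c.2 hh
  exact ⟨(k₁, k₂), max_le hk₁ hk₂⟩

section Derivative

variable {E F : Type*} [NormedAddCommGroup E] [NormedSpace ℝ E]
  [NormedAddCommGroup F] [NormedSpace ℝ F]

theorem ContDiffOn.exists_closedBall_norm_fderiv_sub_le {f : E → F} {W : Set E}
    (hf : ContDiffOn ℝ 1 f W) (hW : IsOpen W) {w : E} (hw : w ∈ W) {η : ℝ} (hη : 0 < η) :
    ∃ ρ > 0, closedBall w ρ ⊆ W ∧ ∀ z ∈ closedBall w ρ, ‖fderiv ℝ f z - fderiv ℝ f w‖ ≤ η := by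
  have hcont : ContinuousAt (fderiv ℝ f) w :=
    (hf.continuousOn_fderiv_of_isOpen hW le_rfl).continuousAt (hW.mem_nhds hw)
  have hnhds : W ∩ {z | ‖fderiv ℝ f z - fderiv ℝ f w‖ ≤ η} ∈ 𝓝 w := by
    simpa only [← dist_eq_norm] using
      inter_mem (hW.mem_nhds hw) (hcont.eventually (closedBall_mem_nhds _ hη))
  obtain ⟨ρ, hρ, hball⟩ := nhds_basis_closedBall.mem_iff.mp hnhds
  exact ⟨ρ, hρ, fun z hz => (hball hz).1, fun z hz => (hball hz).2⟩

theorem norm_apply_sub_le_of_norm_sub_le {f : E → F} {s : Set E} (hs : Convex ℝ s)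
    (hf : ∀ z ∈ s, DifferentiableAt ℝ f z) {A : E →L[ℝ] F} {η : ℝ}
    (hA : ∀ z ∈ s, ‖fderiv ℝ f z - A‖ ≤ η) {x u : E} (hx : x ∈ s) (hxu : x + u ∈ s)
    {y v : F} {δ : ℝ} (hy : ‖f x - y‖ ≤ δ) (hyv : ‖f (x + u) - (y + v)‖ ≤ δ) :
    ‖A u - v‖ ≤ 2 * δ + η * ‖u‖ := by
  have hmvt := hs.norm_image_sub_le_of_norm_fderiv_le' hf hA hx hxu
  rw [add_sub_cancel_left] at hmvt
  calc ‖A u - v‖ = ‖(f (x + u) - (y + v)) - (f x - y) - (f (x + u) - f x - A u)‖ := by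
        congr 1; abel
    _ ≤ δ + δ + η * ‖u‖ := norm_sub_le_of_le (norm_sub_le_of_le hyv hy) hmvt
    _ = 2 * δ + η * ‖u‖ := by ring

theorem fderiv_comp_fderiv_eq_id {f : E → F} {g : F → E} {x : E}
    (hgf : ∀ᶠ z in 𝓝 x, g (f z) = z) (hf : DifferentiableAt ℝ f x)
    (hg : DifferentiableAt ℝ g (f x)) :
    (fderiv ℝ g (f x)).comp (fderiv ℝ f x) = ContinuousLinearMap.id ℝ E :=
  ((hg.hasFDerivAt.comp x hf.hasFDerivAt).congr_of_eventuallyEq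
    (hgf.mono fun _ hz => hz.symm)).unique (hasFDerivAt_id x)

end Derivative

/-- Compare `f` at a lattice point `x` within `h / 2` of `c` and at its neighbour `x + h j`. -/
theorem exists_mul_norm_apply_intPoint_sub_le {f : ℝ × ℝ → ℝ × ℝ} {A : ℝ × ℝ →L[ℝ] ℝ × ℝ}
    {w c a b : ℝ × ℝ} {ρ η h r δ : ℝ} (hh : 0 < h)
    (hf : ∀ z ∈ closedBall w ρ, DifferentiableAt ℝ f z)
    (hA : ∀ z ∈ closedBall w ρ, ‖fderiv ℝ f z - A‖ ≤ η)
    (hmap : ∀ k, a + h • intPoint k ∈ closedBall c r →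
      ∃ m, ‖f (a + h • intPoint k) - (b + h • intPoint m)‖ ≤ δ)
    (j : ℤ × ℤ) (hr : h * (‖intPoint j‖ + 1) ≤ r) (hρ : dist c w + h * (‖intPoint j‖ + 1) ≤ ρ) :
    ∃ m, h * ‖A (intPoint j) - intPoint m‖ ≤ 2 * δ + η * (h * ‖intPoint j‖) := by
  obtain ⟨k, hk⟩ := exists_dist_add_smul_intPoint_le a c hh
  set x := a + h • intPoint k
  have hx' : a + h • intPoint (k + j) = x + h • intPoint j := by
    rw [intPoint_add, smul_add, add_assoc]
  have hdist : dist x c ≤ h * (‖intPoint j‖ + 1) := by nlinarith [norm_nonneg (intPoint j)]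
  have hdist' : dist (x + h • intPoint j) c ≤ h * (‖intPoint j‖ + 1) := by
    calc dist (x + h • intPoint j) c ≤ dist (x + h • intPoint j) x + dist x c :=
          dist_triangle _ _ _
      _ ≤ h * ‖intPoint j‖ + h / 2 := by
          rw [dist_self_add_left, norm_smul, Real.norm_of_nonneg hh.le]; linarith
      _ ≤ h * (‖intPoint j‖ + 1) := by linarith
  obtain ⟨m, hm⟩ := hmap k (mem_closedBall.mpr (hdist.trans hr))
  obtain ⟨m', hm'⟩ := hmap (k + j) (mem_closedBall.mpr (hx' ▸ hdist'.trans hr))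
  rw [hx'] at hm'
  have hxρ : x ∈ closedBall w ρ := mem_closedBall.mpr (by linarith [dist_triangle x c w])
  have hx'ρ : x + h • intPoint j ∈ closedBall w ρ :=
    mem_closedBall.mpr (by linarith [dist_triangle (x + h • intPoint j) c w])
  have hlattice : b + h • intPoint m' = b + h • intPoint m + h • intPoint (m' - m) := by
    rw [intPoint_sub, smul_sub]; abel
  have hest := norm_apply_sub_le_of_norm_sub_le (convex_closedBall w ρ) hf hA hxρ hx'ρ hm
    (hlattice ▸ hm')
  rw [map_smul, ← smul_sub, norm_smul, norm_smul, Real.norm_of_nonneg hh.le] at hest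
  exact ⟨m' - m, hest⟩

namespace LatticeMappingProperty

variable {Φ : ℝ × ℝ → ℝ × ℝ} {W : Set (ℝ × ℝ)}

theorem exists_dist_fderiv_apply_intPoint_lt (hlat : LatticeMappingProperty Φ W) (hW : IsOpen W)
    (hΦ : ContDiffOn ℝ 1 Φ W) {w : ℝ × ℝ} (hw : w ∈ W) (j : ℤ × ℤ) {ε : ℝ} (hε : 0 < ε) :
    ∃ m : ℤ × ℤ, dist (fderiv ℝ Φ w (intPoint j)) (intPoint m) < ε := by
  have hR : 0 < ‖intPoint j‖ + 1 := by positivity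
  obtain ⟨ρ, hρ, hρW, hρA⟩ := hΦ.exists_closedBall_norm_fderiv_sub_le hW hw
    (show 0 < ε / (2 * (‖intPoint j‖ + 1)) by positivity)
  obtain ⟨hs, rs, δ, ws, a, b, hpos, rpos, -, hh0, -, hhr, hδh, hws, -, hmap⟩ := hlat w hw
  obtain ⟨n, hn_w, hn_h, hn_hr, hn_δ⟩ :=
    ((hws.eventually (ball_mem_nhds w (half_pos hρ))).and
      ((hh0.eventually (gt_mem_nhds (show 0 < ρ / (2 * (‖intPoint j‖ + 1)) by positivity))).and
        ((hhr.eventually (gt_mem_nhds (inv_pos.mpr hR))).and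
          (hδh.eventually (gt_mem_nhds (show 0 < ε / 4 by positivity)))))).exists
  have hn := hpos n
  rw [lt_div_iff₀ (by positivity)] at hn_h
  rw [div_lt_iff₀ (rpos n), ← div_eq_inv_mul, lt_div_iff₀ hR] at hn_hr
  rw [div_lt_iff₀ hn] at hn_δ
  obtain ⟨m, hm⟩ := exists_mul_norm_apply_intPoint_sub_le hn
    (fun z hz => (hΦ.differentiableOn one_ne_zero).differentiableAt (hW.mem_nhds (hρW hz)))
    hρA (hmap n) j hn_hr.le (by linarith)
  have hη : ε / (2 * (‖intPoint j‖ + 1)) * ‖intPoint j‖ < ε / 2 := by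
    rw [div_mul_eq_mul_div, div_lt_div_iff₀ (by positivity) two_pos]; nlinarith
  refine ⟨m, ?_⟩
  rw [dist_eq_norm]
  nlinarith

theorem fderiv_apply_intPoint_mem_range (hlat : LatticeMappingProperty Φ W) (hW : IsOpen W)
    (hΦ : ContDiffOn ℝ 1 Φ W) {w : ℝ × ℝ} (hw : w ∈ W) (j : ℤ × ℤ) :
    fderiv ℝ Φ w (intPoint j) ∈ range intPoint := by
  rw [← isClosedEmbedding_intPoint.isClosed_range.closure_eq, Metric.mem_closure_iff]
  intro ε hε
  obtain ⟨m, hm⟩ := hlat.exists_dist_fderiv_apply_intPoint_lt hW hΦ hw j hε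
  exact ⟨_, mem_range_self m, hm⟩

end LatticeMappingProperty

theorem fderiv_eq_of_mapsTo_intPoint {Φ : ℝ × ℝ → ℝ × ℝ} {W : Set (ℝ × ℝ)} (hW : IsOpen W)
    (hWc : IsPreconnected W) (hΦ : ContDiffOn ℝ 1 Φ W)
    (hint : ∀ w ∈ W, ∀ k, fderiv ℝ Φ w (intPoint k) ∈ range intPoint)
    {w w' : ℝ × ℝ} (hw : w ∈ W) (hw' : w' ∈ W) : fderiv ℝ Φ w = fderiv ℝ Φ w' := by
  refine ContinuousLinearMap.ext_intPoint fun k => ?_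
  refine hWc.constant_of_mapsTo isClosedEmbedding_intPoint.isInducing.isDiscrete_range ?_
    (fun z hz => hint z hz k) hw hw'
  exact (ContinuousLinearMap.apply ℝ _ (intPoint k)).continuous.comp_continuousOn
    (hΦ.continuousOn_fderiv_of_isOpen hW le_rfl)

def intMatrixApply (M : Matrix (Fin 2) (Fin 2) ℤ) (v : ℝ × ℝ) : ℝ × ℝ :=
  ((M 0 0 : ℝ) * v.1 + (M 0 1 : ℝ) * v.2, (M 1 0 : ℝ) * v.1 + (M 1 1 : ℝ) * v.2)

theorem intMatrixApply_mul (M N : Matrix (Fin 2) (Fin 2) ℤ) (v : ℝ × ℝ) :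
    intMatrixApply (M * N) v = intMatrixApply M (intMatrixApply N v) := by
  simp only [intMatrixApply, Matrix.mul_apply, Fin.sum_univ_two, Int.cast_add, Int.cast_mul]
  ext <;> ring

theorem eq_one_of_intMatrixApply_eq_self {M : Matrix (Fin 2) (Fin 2) ℤ}
    (h : ∀ v, intMatrixApply M v = v) : M = 1 := by
  have h₁ := h (1, 0)
  have h₂ := h (0, 1)
  simp only [intMatrixApply, Prod.mk.injEq, mul_one, mul_zero, add_zero, zero_add,
    Int.cast_eq_one, Int.cast_eq_zero] at h₁ h₂
  ext i j
  fin_cases i <;> fin_cases j <;> simp [h₁, h₂]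

theorem exists_intMatrixApply_eq_of_mapsTo (A : ℝ × ℝ →L[ℝ] ℝ × ℝ)
    (hA : ∀ k, A (intPoint k) ∈ range intPoint) :
    ∃ M : Matrix (Fin 2) (Fin 2) ℤ, ⇑A = intMatrixApply M := by
  obtain ⟨c, hc⟩ := hA (1, 0)
  obtain ⟨d, hd⟩ := hA (0, 1)
  refine ⟨!![c.1, d.1; c.2, d.2], funext fun v => ?_⟩
  have hv : v = v.1 • intPoint (1, 0) + v.2 • intPoint (0, 1) := by ext <;> simp [intPoint]
  rw [hv, map_add, map_smul, map_smul, ← hc, ← hd]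
  simp [intMatrixApply, intPoint, mul_comm]

theorem lattice_rigidity_GL2Z_general
    (W : Set (ℝ × ℝ)) (hWopen : IsOpen W) (hWconn : IsConnected W)
    (Φ Ψ : ℝ × ℝ → ℝ × ℝ)
    (hΦ : ContDiffOn ℝ 1 Φ W)
    (himage : IsOpen (Φ '' W))
    (hΨ : ContDiffOn ℝ 1 Ψ (Φ '' W))
    (hΨΦ : ∀ w ∈ W, Ψ (Φ w) = w)
    (hlatΦ : LatticeMappingProperty Φ W)
    (hlatΨ : LatticeMappingProperty Ψ (Φ '' W)) :
    ∃ M : Matrix (Fin 2) (Fin 2) ℤ,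
      IsUnit M.det ∧
      ∀ w ∈ W, ∀ v : ℝ × ℝ,
        fderiv ℝ Φ w v =
          (((M 0 0 : ℝ) * v.1 + (M 0 1 : ℝ) * v.2),
           ((M 1 0 : ℝ) * v.1 + (M 1 1 : ℝ) * v.2)) := by
  obtain ⟨⟨w₀, hw₀⟩, hWpre⟩ := hWconn
  have hw₀' : Φ w₀ ∈ Φ '' W := mem_image_of_mem Φ hw₀
  have hintΦ := fun w (hw : w ∈ W) => hlatΦ.fderiv_apply_intPoint_mem_range hWopen hΦ hw
  obtain ⟨M, hM⟩ := exists_intMatrixApply_eq_of_mapsTo _ (hintΦ w₀ hw₀)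
  obtain ⟨N, hN⟩ := exists_intMatrixApply_eq_of_mapsTo _
    (hlatΨ.fderiv_apply_intPoint_mem_range himage hΨ hw₀')
  have hchain := fderiv_comp_fderiv_eq_id
    (eventually_of_mem (hWopen.mem_nhds hw₀) hΨΦ)
    ((hΦ.differentiableOn one_ne_zero).differentiableAt (hWopen.mem_nhds hw₀))
    ((hΨ.differentiableOn one_ne_zero).differentiableAt (himage.mem_nhds hw₀'))
  have hNM : N * M = 1 := eq_one_of_intMatrixApply_eq_self fun v => by
    rw [intMatrixApply_mul, ← hM, ← hN]
    exact congr($hchain v)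
  refine ⟨M, IsUnit.of_mul_eq_one_right N.det (by rw [← Matrix.det_mul, hNM, Matrix.det_one]),
    fun w hw v => ?_⟩
  rw [fderiv_eq_of_mapsTo_intPoint hWopen hWpre hΦ hintΦ hw hw₀, hM]
  rfl

/-- **Proposition 4.2**: if `Φ` is a `C¹` diffeomorphism of a connected open
set `W ⊆ ℝ²` onto its open image, and both `Φ` and its inverse `Ψ = Φ⁻¹`
satisfy the asymptotic lattice-mapping property (on `W` and `Φ '' W`
respectively), then there is a single matrix `M ∈ GL(2, ℤ)` (an integer `2×2`
matrix with determinant `±1`, i.e. invertible over `ℤ`) such that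
`DΦ(w) = M` for all `w ∈ W`. -/
theorem lattice_rigidity_GL2Z
    (W : Set (ℝ × ℝ)) (hWopen : IsOpen W) (hWconn : IsConnected W)
    (Φ Ψ : ℝ × ℝ → ℝ × ℝ)
    (hΦ : ContDiffOn ℝ 1 Φ W)
    (hΦinj : Set.InjOn Φ W)
    (himage : IsOpen (Φ '' W))
    (hΨ : ContDiffOn ℝ 1 Ψ (Φ '' W))
    (hΨΦ : ∀ w ∈ W, Ψ (Φ w) = w)
    (hlatΦ : LatticeMappingProperty Φ W)
    (hlatΨ : LatticeMappingProperty Ψ (Φ '' W)) :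
    ∃ M : Matrix (Fin 2) (Fin 2) ℤ,
      IsUnit M.det ∧
      ∀ w ∈ W, ∀ v : ℝ × ℝ,
        fderiv ℝ Φ w v =
          (((M 0 0 : ℝ) * v.1 + (M 0 1 : ℝ) * v.2),
           ((M 1 0 : ℝ) * v.1 + (M 1 1 : ℝ) * v.2)) :=
  lattice_rigidity_GL2Z_general W hWopen hWconn Φ Ψ hΦ himage hΨ hΨΦ hlatΦ hlatΨ
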